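/- In Setup A, assume additionally that Σ_{k=1}^{n'} a_k/r_k ≥ 1/r_{n+1}. Let S, S' ⊆ {1,…,n} be subsets containing {1,…,n'}, with integer families t = (t_i)_{i∈S} and t' = (t'_i)_{i∈S'}. If U(S,t) ⊆ U(S',t'), then F(S,t) ⊆ F(S',t'). -/

import Mathlib

open scoped RealInnerProductSpace BigOperators

noncomputable section

/-- Euclidean space `ℝⁿ` with the standard inner product. -/
abbrev E (n : ℕ) : Type := EuclideanSpace ℝ (Fin n)

/-- The index set `I' = {1,…,n'}` inside `{1,…,n}`. -/
def IprimeA (n n' : ℕ) : Finset (Fin n) := Finset.univ.filter fun i => i.val < n'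

/-- `v_{n+1} := a₁ v₁ + ⋯ + a_{n'} v_{n'}`. -/
def vLast (n n' : ℕ) (a : Fin n → ℚ) (v : Fin n → E n) : E n :=
  ∑ i ∈ IprimeA n n', (a i : ℝ) • v i

/-- `U(S,t) := {x ∈ ℝⁿ : ⟨x, v_i⟩ > t_i/r_i for all i ∈ S}`. -/
def USet (n : ℕ) (v : Fin n → E n) (r : Fin n → ℤ) (S : Finset (Fin n))
    (t : Fin n → ℤ) : Set (E n) :=
  {x | ∀ i ∈ S, ((t i : ℝ) / (r i : ℝ)) < ⟪x, v i⟫}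

/-- `t_{n+1}(t) := ⌈r_{n+1} · Σ_{k=1}^{n'} a_k t_k / r_k⌉`. -/
def tLast (n n' : ℕ) (a : Fin n → ℚ) (r : Fin n → ℤ) (rl : ℤ) (t : Fin n → ℤ) : ℤ :=
  ⌈(rl : ℚ) * ∑ k ∈ IprimeA n n', a k * (t k : ℚ) / (r k : ℚ)⌉

/-- `F(S,t) := {x ∈ U(S,t) : ⟨x, v_{n+1}⟩ > t_{n+1}(t)/r_{n+1}}`. -/
def FSetA (n n' : ℕ) (a : Fin n → ℚ) (v : Fin n → E n) (r : Fin n → ℤ) (rl : ℤ)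
    (S : Finset (Fin n)) (t : Fin n → ℤ) : Set (E n) :=
  {x | x ∈ USet n v r S t ∧
    ((tLast n n' a r rl t : ℝ) / (rl : ℝ)) < ⟪x, vLast n n' a v⟫}

/-! With `v` a basis, the values `⟪x, v i⟫` can be prescribed freely, so the points of `U(S,t)`
have `⟪x, v j⟫` arbitrarily close to `t_j/r_j`. Hence `U(S,t) ⊆ U(S',t')` forces
`t'_j/r_j ≤ t_j/r_j` for every `j ∈ S'`, and `t_{n+1}` is monotone in these thresholds because the
`a_k` are positive. -/

theorem Module.Basis.exists_forall_inner_eq {ι F : Type*} [Finite ι] [NormedAddCommGroup F]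
    [InnerProductSpace ℝ F] (b : Module.Basis ι ℝ F) (y : ι → ℝ) :
    ∃ x : F, ∀ i, ⟪x, b i⟫ = y i := by
  have := b.finiteDimensional_of_finite
  refine ⟨(InnerProductSpace.toDual ℝ F).symm (LinearMap.toContinuousLinearMap (b.constr ℝ y)),
    fun i => ?_⟩
  rw [InnerProductSpace.toDual_symm_apply, LinearMap.coe_toContinuousLinearMap',
    b.constr_basis]

theorem exists_mem_USet_inner_lt {n : ℕ} {v : Fin n → E n} (hv : LinearIndependent ℝ v)
    (r : Fin n → ℤ) (S : Finset (Fin n)) (t : Fin n → ℤ) {j : Fin n} {c : ℝ}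
    (hc : (t j : ℝ) / r j < c) : ∃ x ∈ USet n v r S t, ⟪x, v j⟫ < c := by
  let b := basisOfLinearIndependentOfCardEqFinrank' v hv (by simp)
  obtain ⟨x, hx⟩ := b.exists_forall_inner_eq fun i => t i / r i + (c - t j / r j) / 2
  simp only [b, coe_basisOfLinearIndependentOfCardEqFinrank'] at hx
  refine ⟨x, fun i _ => ?_, ?_⟩ <;> rw [hx] <;> linarith

theorem div_le_div_of_USet_subset {n : ℕ} {v : Fin n → E n} (hv : LinearIndependent ℝ v)
    {r : Fin n → ℤ} {S S' : Finset (Fin n)} {t t' : Fin n → ℤ}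
    (hU : USet n v r S t ⊆ USet n v r S' t') {j : Fin n} (hj : j ∈ S') :
    (t' j : ℝ) / r j ≤ t j / r j := by
  refine le_of_forall_gt_imp_ge_of_dense fun c hc => ?_
  obtain ⟨x, hxU, hxc⟩ := exists_mem_USet_inner_lt hv r S t hc
  exact ((hU hxU) j hj).trans hxc |>.le

theorem tLast_mono {n n' : ℕ} {a : Fin n → ℚ} (ha : ∀ k ∈ IprimeA n n', 0 ≤ a k)
    (r : Fin n → ℤ) {rl : ℤ} (hrl : 0 ≤ rl) {t t' : Fin n → ℤ}
    (htt' : ∀ k ∈ IprimeA n n', (t' k : ℚ) / r k ≤ t k / r k) :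
    tLast n n' a r rl t' ≤ tLast n n' a r rl t := by
  refine Int.ceil_le_ceil <| mul_le_mul_of_nonneg_left (Finset.sum_le_sum fun k hk => ?_)
    (by exact_mod_cast hrl)
  rw [mul_div_assoc, mul_div_assoc]
  exact mul_le_mul_of_nonneg_left (htt' k hk) (ha k hk)

theorem stmt1 (n n' : ℕ)
    (v : Fin n → E n) (hv : LinearIndependent ℝ v)
    (a : Fin n → ℚ) (ha : ∀ i : Fin n, i.val < n' → 0 < a i)
    (r : Fin n → ℤ) (rl : ℤ) (hrl : 0 < rl)
    (S S' : Finset (Fin n)) (hS' : IprimeA n n' ⊆ S')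
    (t t' : Fin n → ℤ)
    (hU : USet n v r S t ⊆ USet n v r S' t') :
    FSetA n n' a v r rl S t ⊆ FSetA n n' a v r rl S' t' := by
  have htLast : tLast n n' a r rl t' ≤ tLast n n' a r rl t :=
    tLast_mono (fun k hk => (ha k (Finset.mem_filter.mp hk).2).le) r hrl.le
      fun k hk => by exact_mod_cast div_le_div_of_USet_subset hv hU (hS' hk)
  rintro x ⟨hxU, hxF⟩
  refine ⟨hU hxU, lt_of_le_of_lt ?_ hxF⟩
  gcongr
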